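/- arXiv:2410.11962 — 2 statements merged into one kernel-verified Lean document; each statement's English description precedes it below -/
import Mathlib

section
/- Let q ≥ 2 be a real number, g₁ ≥ 2 and g₂ ≥ 1 integers, and set c = min(1/16, g₂/(4·log_q(14g₁+1))) and m = ⌊c·√g₁/g₂⌋. If m ≥ 1 then q^{√g₁/(4m)} - 7g₁ > (√q + 1)^{2g₂} + 1. -/
set_option maxHeartbeats 1000000


theorem stmt_8 (q : ℝ) (g₁ g₂ : ℕ) (hq : 2 ≤ q) (hg₁ : 2 ≤ g₁) (hg₂ : 1 ≤ g₂)
    (c : ℝ) (hc : c = min (1 / 16) ((g₂ : ℝ) / (4 * Real.logb q (14 * (g₁ : ℝ) + 1))))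
    (m : ℤ) (hm : m = ⌊c * Real.sqrt g₁ / (g₂ : ℝ)⌋) (hm1 : 1 ≤ m) :
    (Real.sqrt q + 1) ^ (2 * g₂) + 1 < q ^ (Real.sqrt g₁ / (4 * (m : ℝ))) - 7 * (g₁ : ℝ) := by
  have hq1 : (1:ℝ) < q := by linarith
  have hq0 : (0:ℝ) < q := by linarith
  have hg₁R : (2:ℝ) ≤ (g₁:ℝ) := by exact_mod_cast hg₁
  have hg₂R : (1:ℝ) ≤ (g₂:ℝ) := by exact_mod_cast hg₂
  set L := Real.logb q (14 * (g₁:ℝ) + 1) with hLdef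
  have hL : 0 < L := Real.logb_pos hq1 (by linarith)
  have hc0 : 0 < c := by
    rw [hc]; apply lt_min (by norm_num); positivity
  have hcle16 : c ≤ 1/16 := by rw [hc]; exact min_le_left _ _
  have hcleL : c ≤ (g₂:ℝ)/(4*L) := by rw [hc]; exact min_le_right _ _
  have hs : 0 < Real.sqrt g₁ := Real.sqrt_pos.mpr (by linarith)
  have hmR : (1:ℝ) ≤ (m:ℝ) := by exact_mod_cast hm1
  have hmle : (m:ℝ) ≤ c * Real.sqrt g₁ / g₂ := by rw [hm]; exact Int.floor_le _
  set e := Real.sqrt g₁ / (4 * (m:ℝ)) with hedef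
  have key : (g₂:ℝ)/(4*c) ≤ e := by
    rw [hedef, div_le_div_iff₀ (by positivity) (by positivity)]
    have h1 : (m:ℝ) * (g₂:ℝ) ≤ c * Real.sqrt g₁ :=
      (le_div_iff₀ (by positivity : (0:ℝ) < (g₂:ℝ))).mp hmle
    nlinarith
  have h4g₂ : 4*(g₂:ℝ) ≤ (g₂:ℝ)/(4*c) := by
    rw [le_div_iff₀ (by positivity)]
    nlinarith
  have hLle : L ≤ (g₂:ℝ)/(4*c) := by
    rw [le_div_iff₀ (by positivity)]
    have : c * (4*L) ≤ (g₂:ℝ) := (le_div_iff₀ (by positivity)).mp hcleL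
    nlinarith
  -- q^e ≥ q^(4g₂)
  have h1 : q ^ (4*(g₂:ℝ)) ≤ q ^ e :=
    (Real.rpow_le_rpow_left_iff hq1).mpr (by linarith)
  have h2 : 14*(g₁:ℝ)+1 ≤ q ^ e := by
    have := Real.rpow_logb hq0 hq1.ne' (show (0:ℝ) < 14*(g₁:ℝ)+1 by linarith)
    calc 14*(g₁:ℝ)+1 = q ^ L := this.symm
      _ ≤ q ^ e := (Real.rpow_le_rpow_left_iff hq1).mpr (le_trans hLle key)
  have h3 : q ^ (4*(g₂:ℝ)) = q ^ g₂ * q ^ (3*g₂) := by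
    rw [show (4*(g₂:ℝ)) = ((4*g₂ : ℕ):ℝ) by push_cast; ring, Real.rpow_natCast,
      show 4*g₂ = g₂ + 3*g₂ by ring, pow_add]
  have hQ : (8:ℝ) ≤ q ^ (3*g₂) := by
    calc (8:ℝ) = 2^(3*1) := by norm_num
      _ ≤ 2^(3*g₂) := by
          apply pow_le_pow_right₀ (by norm_num)
          omega
      _ ≤ q^(3*g₂) := by
          apply pow_le_pow_left₀ (by norm_num) hq
  have hqg : (2:ℝ) ≤ q ^ g₂ := le_trans hq (le_self_pow₀ hq1.le (by omega))
  have h2Q : 2 * q ^ (3*g₂) ≤ q ^ e := by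
    calc 2 * q ^ (3*g₂) ≤ q ^ g₂ * q ^ (3*g₂) := by nlinarith
      _ = q ^ (4*(g₂:ℝ)) := h3.symm
      _ ≤ q ^ e := h1
  -- bound (√q+1)^(2g₂)
  have hsq2 : Real.sqrt q ^ 2 = q := Real.sq_sqrt hq0.le
  have hsn : 0 ≤ Real.sqrt q := Real.sqrt_nonneg q
  have hsq3 : (Real.sqrt q + 1)^2 ≤ 3*q := by nlinarith [sq_nonneg (Real.sqrt q - 1)]
  have hsq : (Real.sqrt q + 1) ^ (2*g₂) ≤ (3/4) * q ^ (3*g₂) := by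
    calc (Real.sqrt q + 1) ^ (2*g₂) = ((Real.sqrt q + 1)^2) ^ g₂ := by
          rw [← pow_mul]
      _ ≤ (3*q) ^ g₂ := by
          apply pow_le_pow_left₀ (by positivity) hsq3
      _ ≤ ((3/4) * q^3) ^ g₂ := by
          apply pow_le_pow_left₀ (by positivity)
          nlinarith [mul_nonneg hq0.le (mul_nonneg (by linarith : (0:ℝ) ≤ q - 2)
            (by linarith : (0:ℝ) ≤ q + 2))]
      _ = (3/4)^g₂ * (q^3)^g₂ := mul_pow _ _ _
      _ ≤ (3/4) * q ^ (3*g₂) := by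
          rw [← pow_mul]
          have h34 : ((3:ℝ)/4)^g₂ ≤ 3/4 := by
            calc ((3:ℝ)/4)^g₂ ≤ (3/4)^1 :=
                pow_le_pow_of_le_one (by norm_num) (by norm_num) hg₂
              _ = 3/4 := pow_one _
          nlinarith [pow_pos hq0 (3*g₂)]
  linarith
end

section
/- Let X be a curve over F_q of genus g with gonality γ ≥ 2, and suppose the exponent of Pic⁰(X) is e. If d = ⌈2·log_q(2g+1)⌉ and there exist two distinct degree-d effective divisors P̃, Q̃ with e·P̃ linearly equivalent to e·Q̃, and every nonconstant rational function on X has degree at least γ, then e·d ≥ γ; hence e ≥ γ/(2⌈log_q(2g+1)⌉). -/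
theorem stmt_14 (q g γ e d : ℕ) (hq : 2 ≤ q) (hg : 1 ≤ g) (hγ : 2 ≤ γ) (he : 1 ≤ e)
    (Div : Type*) [AddCommGroup Div] [NoZeroSMulDivisors ℤ Div]
    (deg : Div →+ ℤ) (Eff : Div → Prop)
    (hEffsmul : ∀ (n : ℕ) (D : Div), Eff D → Eff (n • D))
    (LinEquiv : Div → Div → Prop)
    (hgon : ∀ D₁ D₂ : Div, Eff D₁ → Eff D₂ → D₁ ≠ D₂ → deg D₁ = deg D₂ →
      LinEquiv D₁ D₂ → (γ : ℤ) ≤ deg D₁)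
    (hd : (d : ℤ) = ⌈2 * Real.logb q (2 * (g : ℝ) + 1)⌉)
    (P Q : Div) (hP : Eff P) (hQ : Eff Q) (hPQ : P ≠ Q)
    (hdegP : deg P = d) (hdegQ : deg Q = d)
    (hequiv : LinEquiv (e • P) (e • Q)) :
    (γ : ℤ) ≤ (e : ℤ) * (d : ℤ) ∧
      (γ : ℝ) / (2 * ((⌈Real.logb q (2 * (g : ℝ) + 1)⌉ : ℤ) : ℝ)) ≤ (e : ℝ) := by
  have hez : (e : ℤ) ≠ 0 := by exact_mod_cast Nat.one_le_iff_ne_zero.mp he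
  have hne : e • P ≠ e • Q := by
    intro h
    apply hPQ
    have h' : (e : ℤ) • P = (e : ℤ) • Q := by
      simpa [natCast_zsmul] using h
    exact smul_right_injective Div hez h'
  have hdegeP : deg (e • P) = (e : ℤ) * d := by
    rw [map_nsmul, hdegP]; simp [nsmul_eq_mul]
  have hdegeQ : deg (e • Q) = (e : ℤ) * d := by
    rw [map_nsmul, hdegQ]; simp [nsmul_eq_mul]
  have h1 : (γ : ℤ) ≤ (e : ℤ) * d := by
    have := hgon (e • P) (e • Q) (hEffsmul e P hP) (hEffsmul e Q hQ) hne
      (by rw [hdegeP, hdegeQ]) hequiv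
    rwa [hdegeP] at this
  refine ⟨h1, ?_⟩
  set x : ℝ := Real.logb q (2 * (g : ℝ) + 1) with hx
  have hxpos : 0 < x := by
    apply Real.logb_pos
    · exact_mod_cast hq.trans_lt' (by norm_num)
    · have : (1:ℝ) ≤ (g:ℝ) := by exact_mod_cast hg
      linarith
  have hL : (1 : ℤ) ≤ ⌈x⌉ := Int.ceil_pos.mpr hxpos
  have hdle : (d : ℤ) ≤ 2 * ⌈x⌉ := by
    rw [hd]
    apply Int.ceil_le.mpr
    push_cast
    have := Int.le_ceil x
    linarith
  have hγle : (γ : ℤ) ≤ (e : ℤ) * (2 * ⌈x⌉) := by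
    calc (γ : ℤ) ≤ (e : ℤ) * d := h1
      _ ≤ (e : ℤ) * (2 * ⌈x⌉) := by
          apply mul_le_mul_of_nonneg_left hdle (by positivity)
  have hγleR : (γ : ℝ) ≤ (e : ℝ) * (2 * ((⌈x⌉ : ℤ) : ℝ)) := by exact_mod_cast hγle
  have hden : (0:ℝ) < 2 * ((⌈x⌉ : ℤ) : ℝ) := by
    have : (1:ℝ) ≤ ((⌈x⌉ : ℤ) : ℝ) := by exact_mod_cast hL
    linarith
  rw [div_le_iff₀ hden]
  linarith
end
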